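/- arXiv:0809.1262 — 2 statements merged into one kernel-verified Lean document; each statement's English description precedes it below -/
import Mathlib

section
/- Two finite disjoint subsets A, B of the circle R/Z are unlinked if and only if the Euclidean convex hulls in the closed unit disk of exp(2πiA) and exp(2πiB) are disjoint. -/
noncomputable section
open Set Function

/-- The circle `ℝ/ℤ`. -/
abbrev Circle1 := AddCircle (1 : ℝ)

/-- Multiplication by `d` on the circle. -/
def md (d : ℕ) (x : Circle1) : Circle1 := d • x

/-- The rational angles `ℚ/ℤ ⊆ ℝ/ℤ`. -/
def ratC : Set Circle1 := {x | ∃ q : ℚ, x = ((q : ℝ) : Circle1)}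

/-- `A` and `B` are unlinked: `B` is contained in a single connected
component of the complement of `A`. -/
def Unlinked (A B : Set Circle1) : Prop :=
  ∃ x ∈ Aᶜ, B ⊆ connectedComponentIn Aᶜ x

/-- `C` is a connected component of `S`. -/
def IsCompOf (C S : Set Circle1) : Prop :=
  ∃ x ∈ S, C = connectedComponentIn S x

/-- The class of `x` under a relation `r`. -/
def relClass (r : Circle1 → Circle1 → Prop) (x : Circle1) : Set Circle1 := {y | r x y}

/-- A rational lamination: a closed equivalence relation on `ℚ/ℤ` with finite,
pairwise unlinked classes. -/
structure RatLam where
  rel : Circle1 → Circle1 → Prop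
  rel_rat : ∀ x y, rel x y → x ∈ ratC ∧ y ∈ ratC
  refl : ∀ x ∈ ratC, rel x x
  symm : ∀ x y, rel x y → rel y x
  trans : ∀ x y z, rel x y → rel y z → rel x z
  closed' : ∀ x ∈ ratC, ∀ y ∈ ratC,
    (x, y) ∈ closure {p : Circle1 × Circle1 | rel p.1 p.2} → rel x y
  finiteClass : ∀ x, (relClass rel x).Finite
  unlinkedClass : ∀ x y, ¬ rel x y → Unlinked (relClass rel x) (relClass rel y)

/-- `m_d` maps `A` onto `B` in a consecutive-preserving way: the image of `A` is `B`
and the connected components of the complement of `A` are sent to components of the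
complement of `B` endpoint-wise. -/
def ConsecutiveImage (d : ℕ) (A B : Set Circle1) : Prop :=
  md d '' A = B ∧
    ∀ C, IsCompOf C Aᶜ → ∃ C', IsCompOf C' Bᶜ ∧ frontier C' = md d '' frontier C

/-- A `d`-invariant rational lamination. -/
structure InvRatLam (d : ℕ) extends RatLam where
  invariant : ∀ x ∈ ratC,
    ConsecutiveImage d (relClass rel x) (relClass rel (md d x))

/-- `m_d : A → m_d(A)` is `δ`-to-one. -/
def classDeg (d : ℕ) (A : Set Circle1) (δ : ℕ) : Prop :=
  ∀ y ∈ md d '' A, Set.ncard {x | x ∈ A ∧ md d x = y} = δ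

/-- The `λ`-unlinked relation on irrational angles: `θ ~ θ'` iff they lie in the same
connected component of the complement of every `λ`-class. -/
def UnlRel (r : Circle1 → Circle1 → Prop) (θ θ' : Circle1) : Prop :=
  θ ∉ ratC ∧ θ' ∉ ratC ∧
    (θ = θ' ∨ ∀ x ∈ ratC, θ' ∈ connectedComponentIn (relClass r x)ᶜ θ)

/-- `L` is a `λ`-unlinked class. -/
def IsUnlClass (r : Circle1 → Circle1 → Prop) (L : Set Circle1) : Prop :=
  ∃ θ, θ ∉ ratC ∧ L = {θ' | UnlRel r θ θ'}

/-- The map `θ ↦ exp (2πiθ)` on the circle `ℝ/ℤ`. -/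
def circleExp : Circle1 → ℂ :=
  Function.Periodic.lift (f := fun t : ℝ => Complex.exp (2 * Real.pi * Complex.I * t))
    (by
      intro t
      have h1 : ((t + 1 : ℝ) : ℂ) = (t : ℂ) + 1 := by push_cast; ring
      have h2 : (2 : ℂ) * Real.pi * Complex.I * ((t : ℂ) + 1)
          = 2 * Real.pi * Complex.I * (t : ℂ) + 2 * Real.pi * Complex.I := by ring
      simp only [h1, h2, Complex.exp_add, Complex.exp_two_pi_mul_I, mul_one])

namespace UnlAux

open Real

def E (t : ℝ) : ℂ := Complex.exp (2 * Real.pi * Complex.I * t)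

lemma circleExp_coe (t : ℝ) : circleExp (t : Circle1) = E t := rfl

lemma E_re (m t : ℝ) : (E (-m) * E t).re = Real.cos (2 * π * (t - m)) := by
  rw [E, E, ← Complex.exp_add]
  have h : 2 * (Real.pi:ℂ) * Complex.I * ((-m : ℝ):ℂ) + 2 * (Real.pi:ℂ) * Complex.I * (t:ℂ)
      = ((2 * π * (t - m) : ℝ) : ℂ) * Complex.I := by push_cast; ring
  rw [h, Complex.exp_ofReal_mul_I_re]

lemma E_norm (t : ℝ) : ‖E t‖ = 1 := by
  have h : 2 * (Real.pi:ℂ) * Complex.I * (t:ℂ) = ((2 * π * t : ℝ) : ℂ) * Complex.I := by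
    push_cast; ring
  rw [E, h, Complex.norm_exp_ofReal_mul_I]

lemma E_inj {s t : ℝ} (h : E s = E t) : ∃ n : ℤ, s = t + n := by
  rw [E, E, Complex.exp_eq_exp_iff_exists_int] at h
  obtain ⟨n, hn⟩ := h
  refine ⟨n, ?_⟩
  have hπ : (Real.pi : ℂ) ≠ 0 := by
    exact_mod_cast Real.pi_ne_zero
  have h2 : ((s : ℂ)) = (t : ℂ) + n := by
    have hne : (2 : ℂ) * (Real.pi:ℂ) * Complex.I ≠ 0 :=
      mul_ne_zero (mul_ne_zero two_ne_zero hπ) Complex.I_ne_zero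
    have h3 : (2:ℂ) * (Real.pi:ℂ) * Complex.I * (s:ℂ)
        = 2 * (Real.pi:ℂ) * Complex.I * ((t:ℂ) + n) := by rw [hn]; ring
    exact mul_left_cancel₀ hne h3
  exact_mod_cast h2

def f (m : ℝ) (z : ℂ) : ℝ := (E (-m) * z).re

lemma f_lin (m : ℝ) : IsLinearMap ℝ (f m) := by
  constructor
  · intro x y; simp [f, mul_add]
  · intro r x
    simp only [f, smul_eq_mul, Complex.real_smul]
    rw [show E (-m) * ((r:ℂ) * x) = (r:ℂ) * (E (-m) * x) by ring, Complex.re_ofReal_mul]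

lemma f_cont (m : ℝ) : Continuous (f m) :=
  Complex.continuous_re.comp (continuous_const.mul continuous_id)

lemma f_E (m t : ℝ) : f m (E t) = Real.cos (2 * π * (t - m)) := E_re m t

lemma cos_le {d x : ℝ} (hd0 : 0 < d) (h1 : d ≤ x) (h2 : x ≤ 1 - d) :
    Real.cos (2 * π * x) ≤ Real.cos (2 * π * d) := by
  rcases le_or_gt x (1/2) with h | h
  · exact Real.cos_le_cos_of_nonneg_of_le_pi (by positivity)
      (by nlinarith [Real.pi_pos]) (by nlinarith [Real.pi_pos])
  · have he : Real.cos (2 * π * x) = Real.cos (2 * π * (1 - x)) := by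
      rw [show 2 * π * x = 2 * π - 2 * π * (1 - x) by ring, Real.cos_two_pi_sub]
    rw [he]
    exact Real.cos_le_cos_of_nonneg_of_le_pi (by positivity)
      (by nlinarith [Real.pi_pos]) (by nlinarith [Real.pi_pos])

lemma cos_lt {d x : ℝ} (hd0 : 0 < d) (h1 : d < x) (h2 : x < 1 - d) :
    Real.cos (2 * π * x) < Real.cos (2 * π * d) := by
  rcases le_or_gt x (1/2) with h | h
  · exact Real.cos_lt_cos_of_nonneg_of_le_pi (by positivity)
      (by nlinarith [Real.pi_pos]) (by nlinarith [Real.pi_pos])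
  · have he : Real.cos (2 * π * x) = Real.cos (2 * π * (1 - x)) := by
      rw [show 2 * π * x = 2 * π - 2 * π * (1 - x) by ring, Real.cos_two_pi_sub]
    rw [he]
    exact Real.cos_lt_cos_of_nonneg_of_le_pi (by positivity)
      (by nlinarith [Real.pi_pos]) (by nlinarith [Real.pi_pos])

lemma cos_gt {d x : ℝ} (hd : d ≤ 1/2) (h1 : |x| < d) :
    Real.cos (2 * π * d) < Real.cos (2 * π * x) := by
  have h0 : 0 ≤ |x| := abs_nonneg x
  have he : Real.cos (2 * π * x) = Real.cos (2 * π * |x|) := by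
    rcases abs_cases x with ⟨h, _⟩ | ⟨h, _⟩
    · rw [h]
    · rw [h, show 2 * π * -x = -(2 * π * x) by ring, Real.cos_neg]
  rw [he]
  exact Real.cos_lt_cos_of_nonneg_of_le_pi (by positivity)
    (by nlinarith [Real.pi_pos]) (by nlinarith [Real.pi_pos])

def toIco (t₀ : ℝ) (x : Circle1) : ℝ := (AddCircle.equivIco 1 t₀ x : ℝ)

lemma toIco_mem (t₀ : ℝ) (x : Circle1) : toIco t₀ x ∈ Ico t₀ (t₀ + 1) :=
  (AddCircle.equivIco 1 t₀ x).2

lemma coe_toIco (t₀ : ℝ) (x : Circle1) : ((toIco t₀ x : ℝ) : Circle1) = x :=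
  (AddCircle.equivIco 1 t₀).symm_apply_apply x

lemma toIco_coe (t₀ : ℝ) {s : ℝ} (hs : s ∈ Ico t₀ (t₀ + 1)) : toIco t₀ (s : Circle1) = s := by
  have h := coe_toIco t₀ (s : Circle1)
  exact (AddCircle.coe_eq_coe_iff_of_mem_Ico (toIco_mem t₀ _) hs).mp h

lemma continuousOn_toIco (t₀ : ℝ) {C : Set Circle1} (hC : ∀ x ∈ C, x ≠ (t₀ : Circle1)) :
    ContinuousOn (toIco t₀) C := fun x hx =>
  (continuous_subtype_val.continuousAt.comp
    (AddCircle.continuousAt_equivIco 1 t₀ (hC x hx))).continuousWithinAt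

lemma continuous_coe : Continuous (fun s : ℝ => (s : Circle1)) :=
  AddCircle.continuous_mk' 1

lemma unlinked_of_arc {A B : Set Circle1} {t₀ u v : ℝ}
    (hu : t₀ ≤ u) (huv : u < v) (hv : v ≤ t₀ + 1)
    (hA : ∀ a ∈ A, toIco t₀ a ∉ Ioo u v)
    (hB : ∀ b ∈ B, toIco t₀ b ∈ Ioo u v) :
    Unlinked A B := by
  set J : Set Circle1 := (fun s : ℝ => (s : Circle1)) '' Ioo u v with hJ
  have hJpre : IsPreconnected J :=
    isPreconnected_Ioo.image _ continuous_coe.continuousOn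
  have hmem : ∀ s ∈ Ioo u v, (s : Circle1) ∈ Aᶜ := by
    intro s hs hsA
    have hsIco : s ∈ Ico t₀ (t₀ + 1) := ⟨hu.trans hs.1.le, lt_of_lt_of_le hs.2 hv⟩
    have h2 := hA _ hsA
    rw [toIco_coe t₀ hsIco] at h2
    exact h2 hs
  have hJA : J ⊆ Aᶜ := by rintro _ ⟨s, hs, rfl⟩; exact hmem s hs
  have hx : ((u+v)/2 : ℝ) ∈ Ioo u v := ⟨by linarith, by linarith⟩
  refine ⟨(((u+v)/2 : ℝ) : Circle1), hmem _ hx, ?_⟩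
  have hBJ : B ⊆ J := fun b hb => ⟨toIco t₀ b, hB b hb, coe_toIco t₀ b⟩
  exact hBJ.trans (hJpre.subset_connectedComponentIn ⟨_, hx, rfl⟩ hJA)

lemma not_unlinked {A B : Set Circle1} {t₀ a' : ℝ} {b₁ b₂ : Circle1}
    (ht₀ : ((t₀:ℝ) : Circle1) ∈ A) (ha'A : ((a':ℝ) : Circle1) ∈ A)
    (hb₁ : b₁ ∈ B) (hb₂ : b₂ ∈ B)
    (h1 : toIco t₀ b₁ < a') (h2 : a' < toIco t₀ b₂) :
    ¬ Unlinked A B := by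
  rintro ⟨x, hx, hsub⟩
  set C := connectedComponentIn Aᶜ x with hC
  have hCA : C ⊆ Aᶜ := connectedComponentIn_subset _ _
  have hCne : ∀ y ∈ C, y ≠ ((t₀:ℝ) : Circle1) := by
    intro y hy he; exact (hCA hy) (he ▸ ht₀)
  have hcont : ContinuousOn (toIco t₀) C := continuousOn_toIco t₀ hCne
  have hpre : IsPreconnected (toIco t₀ '' C) :=
    isPreconnected_connectedComponentIn.image _ hcont
  have hIcc : Icc (toIco t₀ b₁) (toIco t₀ b₂) ⊆ toIco t₀ '' C :=
    hpre.Icc_subset ⟨b₁, hsub hb₁, rfl⟩ ⟨b₂, hsub hb₂, rfl⟩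
  obtain ⟨y, hyC, hy⟩ := hIcc ⟨h1.le, h2.le⟩
  have hya : y = ((a':ℝ) : Circle1) := by rw [← coe_toIco t₀ y, hy]
  exact (hCA hyC) (hya ▸ ha'A)

lemma disjoint_hulls {A B : Set Circle1} {t₀ u v : ℝ}
    (hu : t₀ ≤ u) (huv : u < v) (hv : v ≤ t₀ + 1)
    (hA : ∀ a ∈ A, toIco t₀ a ∉ Ioo u v)
    (hB : ∀ b ∈ B, toIco t₀ b ∈ Ioo u v) :
    Disjoint (convexHull ℝ (circleExp '' A)) (convexHull ℝ (circleExp '' B)) := by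
  obtain ⟨m, hm⟩ : ∃ m : ℝ, m = (u + v)/2 := ⟨_, rfl⟩
  obtain ⟨d, hd⟩ : ∃ d : ℝ, d = (v - u)/2 := ⟨_, rfl⟩
  have hd0 : 0 < d := by rw [hd]; linarith
  have hd2 : d ≤ 1/2 := by rw [hd]; linarith
  set c := Real.cos (2*π*d) with hc
  have hAle : ∀ z ∈ circleExp '' A, f m z ≤ c := by
    rintro _ ⟨a, ha, rfl⟩
    rw [← coe_toIco t₀ a, circleExp_coe, f_E]
    have hta := toIco_mem t₀ a
    have hnot := hA a ha
    set ta := toIco t₀ a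
    rcases le_or_gt ta u with h | h
    · rw [show 2*π*(ta-m) = -(2*π*(m-ta)) by ring, Real.cos_neg]
      exact cos_le hd0 (by rw [hd, hm]; linarith) (by rw [hd, hm]; linarith [hta.1])
    · have hvta : v ≤ ta := by
        by_contra hlt
        exact hnot ⟨h, not_le.mp hlt⟩
      exact cos_le hd0 (by rw [hd, hm]; linarith) (by rw [hd, hm]; linarith [hta.2])
  have hBgt : ∀ z ∈ circleExp '' B, c < f m z := by
    rintro _ ⟨b, hb, rfl⟩
    rw [← coe_toIco t₀ b, circleExp_coe, f_E]
    have htb := hB b hb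
    exact cos_gt hd2 (abs_lt.mpr ⟨by linarith [htb.1], by linarith [htb.2]⟩)
  have hSA : convexHull ℝ (circleExp '' A) ⊆ {z | f m z ≤ c} :=
    convexHull_min hAle (convex_halfSpace_le (f_lin m) c)
  have hSB : convexHull ℝ (circleExp '' B) ⊆ {z | c < f m z} :=
    convexHull_min hBgt (convex_halfSpace_gt (f_lin m) c)
  rw [Set.disjoint_left]
  intro z hzA hzB
  have h1 : f m z ≤ c := hSA hzA
  have h2 : c < f m z := hSB hzB
  linarith

set_option maxHeartbeats 1000000 in
lemma hulls_meet {A B : Set Circle1} {t₁ t₂ t₃ t₄ : ℝ}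
    (h12 : t₁ < t₂) (h23 : t₂ < t₃) (h34 : t₃ < t₄) (h41 : t₄ < t₁ + 1)
    (ha1 : ((t₁:ℝ) : Circle1) ∈ A) (ha3 : ((t₃:ℝ) : Circle1) ∈ A)
    (hb2 : ((t₂:ℝ) : Circle1) ∈ B) (hb4 : ((t₄:ℝ) : Circle1) ∈ B) :
    ¬ Disjoint (convexHull ℝ (circleExp '' A)) (convexHull ℝ (circleExp '' B)) := by
  obtain ⟨m, hm⟩ : ∃ m : ℝ, m = (t₁ + t₃)/2 := ⟨_, rfl⟩
  obtain ⟨d, hd⟩ : ∃ d : ℝ, d = (t₃ - t₁)/2 := ⟨_, rfl⟩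
  have hd0 : 0 < d := by rw [hd]; linarith
  have hd2 : d < 1/2 := by rw [hd]; linarith
  set c := Real.cos (2*π*d) with hc
  have hf1 : f m (E t₁) = c := by
    rw [f_E, show 2*π*(t₁ - m) = -(2*π*d) by rw [hm, hd]; ring, Real.cos_neg]
  have hf3 : f m (E t₃) = c := by
    rw [f_E, show t₃ - m = d by rw [hm, hd]; ring]
  have hf2 : c < f m (E t₂) := by
    rw [f_E]
    exact cos_gt hd2.le (abs_lt.mpr ⟨by linarith, by linarith⟩)
  have hf4 : f m (E t₄) < c := by
    rw [f_E]
    exact cos_lt hd0 (by linarith) (by linarith)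
  set z1 := E t₁ with hz1e
  set z2 := E t₂
  set z3 := E t₃
  set z4 := E t₄
  set ψ : ℝ → ℝ := fun s => f m ((1 - s) • z2 + s • z4) with hψ
  have hψc : ContinuousOn ψ (Icc 0 1) := by
    apply Continuous.continuousOn
    exact (f_cont m).comp
      (((continuous_const.sub continuous_id).smul continuous_const).add
        (continuous_id.smul continuous_const))
  have hψ0 : ψ 0 = f m z2 := by simp [hψ]
  have hψ1 : ψ 1 = f m z4 := by simp [hψ]
  have hcmem : c ∈ Icc (ψ 1) (ψ 0) := ⟨by rw [hψ1]; exact hf4.le, by rw [hψ0]; exact hf2.le⟩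
  obtain ⟨s, hs01, hψs⟩ := intermediate_value_Icc' zero_le_one hψc hcmem
  set w := (1 - s) • z2 + s • z4 with hw
  have hfw : f m w = c := hψs
  -- w in hull of B
  have hwB : w ∈ convexHull ℝ (circleExp '' B) := by
    have hm2 : z2 ∈ circleExp '' B := ⟨_, hb2, rfl⟩
    have hm4 : z4 ∈ circleExp '' B := ⟨_, hb4, rfl⟩
    exact segment_subset_convexHull hm2 hm4
      ⟨1 - s, s, by linarith [hs01.2], hs01.1, by ring, rfl⟩
  -- |w| ≤ 1
  have habs_smul : ∀ (r : ℝ) (z : ℂ), ‖r • z‖ = |r| * ‖z‖ := by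
    intro r z; rw [norm_smul, Real.norm_eq_abs]
  have hnw : ‖w‖ ≤ 1 := by
    calc ‖w‖ ≤ ‖(1 - s) • z2‖ + ‖s • z4‖ :=
          norm_add_le _ _
      _ = |1 - s| * ‖z2‖ + |s| * ‖z4‖ := by rw [habs_smul, habs_smul]
      _ = (1 - s) * 1 + s * 1 := by
          rw [E_norm, E_norm, abs_of_nonneg (by linarith [hs01.2]), abs_of_nonneg hs01.1]
      _ = 1 := by ring
  -- chord through z1 z3
  have hωne : E (-m) ≠ 0 := Complex.exp_ne_zero _
  have hz13 : z3 - z1 ≠ 0 := by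
    rw [sub_ne_zero]
    intro h
    obtain ⟨n, hn⟩ := E_inj h
    have h0 : (0:ℝ) < (n:ℝ) := by linarith
    have h1 : ((n:ℝ)) < 1 := by linarith
    have h0' : (0:ℤ) < n := by exact_mod_cast h0
    have h1' : (n:ℤ) < 1 := by exact_mod_cast h1
    omega
  have hαre : (E (-m) * (w - z1)).re = 0 := by
    rw [show E (-m) * (w - z1) = E (-m) * w - E (-m) * z1 by ring, Complex.sub_re]
    have : (E (-m) * w).re = f m w := rfl
    rw [this, hfw]
    have : (E (-m) * z1).re = f m z1 := rfl
    rw [this, hf1, sub_self]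
  have hβre : (E (-m) * (z3 - z1)).re = 0 := by
    rw [show E (-m) * (z3 - z1) = E (-m) * z3 - E (-m) * z1 by ring, Complex.sub_re]
    have h3 : (E (-m) * z3).re = f m z3 := rfl
    have h1 : (E (-m) * z1).re = f m z1 := rfl
    rw [h3, h1, hf1, hf3, sub_self]
  have hβne : E (-m) * (z3 - z1) ≠ 0 := mul_ne_zero hωne hz13
  have hβim : (E (-m) * (z3 - z1)).im ≠ 0 := by
    intro h
    exact hβne (Complex.ext hβre h)
  set s' := (E (-m) * (w - z1)).im / (E (-m) * (z3 - z1)).im with hs'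
  have hαβ : E (-m) * (w - z1) = (s' : ℂ) * (E (-m) * (z3 - z1)) := by
    apply Complex.ext
    · rw [hαre, Complex.re_ofReal_mul, hβre, mul_zero]
    · rw [Complex.im_ofReal_mul, hs', div_mul_cancel₀ _ hβim]
  have hws : w - z1 = (s':ℂ) * (z3 - z1) := by
    apply mul_left_cancel₀ hωne
    rw [show E (-m) * ((s':ℂ)*(z3-z1)) = (s':ℂ) * (E (-m)*(z3-z1)) by ring]
    exact hαβ
  have hww : w = z1 + (s':ℂ) * (z3 - z1) := by rw [← hws]; ring
  -- bound s'
  have hnsq1 : z1.re^2 + z1.im^2 = 1 := by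
    have habs : ‖z1‖ = 1 := E_norm t₁
    have h2 : Complex.normSq z1 = 1 := by rw [Complex.normSq_eq_norm_sq, habs]; norm_num
    rw [Complex.normSq_apply] at h2; nlinarith [h2]
  have hnsq3 : z3.re^2 + z3.im^2 = 1 := by
    have habs : ‖z3‖ = 1 := E_norm t₃
    have h2 : Complex.normSq z3 = 1 := by rw [Complex.normSq_eq_norm_sq, habs]; norm_num
    rw [Complex.normSq_apply] at h2; nlinarith [h2]
  have hnsqw : w.re^2 + w.im^2 ≤ 1 := by
    have h2 : Complex.normSq w ≤ 1 := by
      rw [Complex.normSq_eq_norm_sq]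
      nlinarith [hnw, norm_nonneg w]
    rw [Complex.normSq_apply] at h2; nlinarith [h2]
  have hwre : w.re = z1.re + s' * (z3.re - z1.re) := by
    rw [hww]
    simp only [Complex.add_re, Complex.mul_re, Complex.ofReal_re, Complex.ofReal_im,
      Complex.sub_re, Complex.sub_im, zero_mul, sub_zero]
  have hwim : w.im = z1.im + s' * (z3.im - z1.im) := by
    rw [hww]
    simp only [Complex.add_im, Complex.mul_im, Complex.ofReal_re, Complex.ofReal_im,
      Complex.sub_re, Complex.sub_im, zero_mul, add_zero]
  have hupos : 0 < (z3.re - z1.re)^2 + (z3.im - z1.im)^2 := by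
    have := Complex.normSq_pos.mpr hz13
    rw [Complex.normSq_apply] at this
    simp only [Complex.sub_re, Complex.sub_im] at this
    nlinarith [this]
  have hV : 2*(z1.re*(z3.re - z1.re) + z1.im*(z3.im - z1.im))
      = -((z3.re - z1.re)^2 + (z3.im - z1.im)^2) := by
    linear_combination hnsq3 - hnsq1
  have hexp : (z1.re + s'*(z3.re - z1.re))^2 + (z1.im + s'*(z3.im - z1.im))^2
      = 1 + (s'^2 - s') * ((z3.re - z1.re)^2 + (z3.im - z1.im)^2) := by
    linear_combination hnsq1 + s' * hV
  have hs2 : s'^2 ≤ s' := by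
    rw [hwre, hwim, hexp] at hnsqw
    have hle : (s'^2 - s') * ((z3.re - z1.re)^2 + (z3.im - z1.im)^2) ≤ 0 := by linarith
    nlinarith [hle, hupos]
  have hs'0 : 0 ≤ s' := by nlinarith [sq_nonneg s']
  have hs'1 : s' ≤ 1 := by nlinarith [sq_nonneg (1 - s')]
  have hwA : w ∈ convexHull ℝ (circleExp '' A) := by
    have hm1 : z1 ∈ circleExp '' A := ⟨_, ha1, rfl⟩
    have hm3 : z3 ∈ circleExp '' A := ⟨_, ha3, rfl⟩
    refine segment_subset_convexHull hm1 hm3 ⟨1 - s', s', by linarith, hs'0, by ring, ?_⟩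
    rw [hww]
    simp only [Complex.real_smul]
    push_cast
    ring
  exact fun hdisj => Set.not_disjoint_iff.mpr ⟨w, hwA, hwB⟩ hdisj

end UnlAux

open UnlAux in
set_option maxHeartbeats 1000000 in
/-- Two finite disjoint subsets `A, B` of `ℝ/ℤ` are unlinked if and
only if the convex hulls of `exp (2πi A)` and `exp (2πi B)` in the closed unit disk
are disjoint. -/
theorem unlinked_iff_disjoint_convexHulls (A B : Set Circle1)
    (hA : A.Finite) (hB : B.Finite) (hdisj : Disjoint A B) :
    Unlinked A B ↔
      Disjoint (convexHull ℝ (circleExp '' A)) (convexHull ℝ (circleExp '' B)) := by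
  rcases A.eq_empty_or_nonempty with rfl | hAne
  · apply iff_of_true
    · have hconn : IsPreconnected (range (fun s : ℝ => (s : Circle1))) := by
        rw [← image_univ]
        exact isPreconnected_univ.image _ continuous_coe.continuousOn
      refine ⟨((0:ℝ):Circle1), by simp, ?_⟩
      have hsub : range (fun s : ℝ => (s : Circle1))
          ⊆ connectedComponentIn (∅ : Set Circle1)ᶜ ((0:ℝ):Circle1) :=
        hconn.subset_connectedComponentIn ⟨0, rfl⟩ (by simp)
      intro b _
      exact hsub ⟨toIco 0 b, coe_toIco 0 b⟩
    · simp
  rcases B.eq_empty_or_nonempty with rfl | hBne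
  · apply iff_of_true
    · have hinj : InjOn (fun s : ℝ => (s : Circle1)) (Ico 0 1) := by
        intro x hx y hy hxy
        have hx' : x ∈ Ico (0:ℝ) (0+1) := by simpa using hx
        have hy' : y ∈ Ico (0:ℝ) (0+1) := by simpa using hy
        exact (AddCircle.coe_eq_coe_iff_of_mem_Ico hx' hy').mp hxy
      have hinf : (univ : Set Circle1).Infinite :=
        ((Set.Ico_infinite (by norm_num : (0:ℝ) < 1)).image hinj).mono (subset_univ _)
      obtain ⟨x, hx⟩ := (hinf.diff hA).nonempty
      exact ⟨x, hx.2, empty_subset _⟩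
    · simp
  -- both nonempty
  obtain ⟨a₀, ha₀⟩ := hAne
  set t₀ := toIco 0 a₀ with ht₀def
  have ht₀A : ((t₀:ℝ):Circle1) ∈ A := by rw [ht₀def, coe_toIco]; exact ha₀
  set g := toIco t₀ with hgdef
  set A' := g '' A with hA'
  set B' := g '' B with hB'
  have hA'fin : A'.Finite := hA.image _
  have hB'fin : B'.Finite := hB.image _
  have hB'ne : B'.Nonempty := hBne.image _
  have hcoeA : ∀ t ∈ A', ((t:ℝ):Circle1) ∈ A := by
    rintro _ ⟨a, haA, rfl⟩; rw [hgdef, coe_toIco]; exact haA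
  have hcoeB : ∀ t ∈ B', ((t:ℝ):Circle1) ∈ B := by
    rintro _ ⟨b, hbB, rfl⟩; rw [hgdef, coe_toIco]; exact hbB
  have hA'mem : ∀ t ∈ A', t ∈ Ico t₀ (t₀+1) := by
    rintro _ ⟨a, _, rfl⟩; exact toIco_mem t₀ a
  have hB'mem : ∀ t ∈ B', t ∈ Ico t₀ (t₀+1) := by
    rintro _ ⟨b, _, rfl⟩; exact toIco_mem t₀ b
  have hAB' : ∀ t : ℝ, t ∈ A' → t ∈ B' → False := by
    intro t htA htB
    exact (Set.disjoint_left.mp hdisj (hcoeA t htA)) (hcoeB t htB)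
  set bmin := sInf B' with hbmin
  set bmax := sSup B' with hbmax
  have hbminB : bmin ∈ B' := hB'ne.csInf_mem hB'fin
  have hbmaxB : bmax ∈ B' := hB'ne.csSup_mem hB'fin
  have hminle : ∀ t ∈ B', bmin ≤ t := fun t ht => csInf_le hB'fin.bddBelow ht
  have hmaxle : ∀ t ∈ B', t ≤ bmax := fun t ht => le_csSup hB'fin.bddAbove ht
  have hminmax : bmin ≤ bmax := hminle _ hbmaxB
  have ht₀A' : t₀ ∈ A' := by
    refine ⟨((t₀:ℝ):Circle1), ht₀A, ?_⟩
    rw [hgdef]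
    exact toIco_coe t₀ ⟨le_refl _, by linarith⟩
  have ht₀bmin : t₀ < bmin := by
    rcases lt_or_eq_of_le (hB'mem _ hbminB).1 with h | h
    · exact h
    · exact absurd (h ▸ hbminB) (fun hc => hAB' t₀ ht₀A' hc)
  by_cases hP : ∀ t ∈ A', t < bmin ∨ bmax < t
  · -- unlinked and hulls disjoint
    set S := {t ∈ A' | t < bmin} with hS
    have hSfin : S.Finite := hA'fin.subset (sep_subset _ _)
    have hSne : S.Nonempty := ⟨t₀, ht₀A', ht₀bmin⟩
    set u := sSup S with hu
    have huS : u ∈ S := hSne.csSup_mem hSfin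
    set T := insert (t₀+1) {t ∈ A' | bmax < t} with hT
    have hTfin : T.Finite := (hA'fin.subset (sep_subset _ _)).insert _
    have hTne : T.Nonempty := ⟨t₀+1, mem_insert _ _⟩
    set v := sInf T with hv
    have hvT : v ∈ T := hTne.csInf_mem hTfin
    have ht₀u : t₀ ≤ u := (hA'mem _ huS.1).1
    have hubmin : u < bmin := huS.2
    have hbmaxv : bmax < v := by
      rcases hvT with h | h
      · rw [h]; exact (hB'mem _ hbmaxB).2
      · exact h.2
    have hvle : v ≤ t₀ + 1 := csInf_le hTfin.bddBelow (mem_insert _ _)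
    have huv : u < v := by linarith
    have hAa : ∀ a ∈ A, g a ∉ Ioo u v := by
      intro a ha h
      have hga : g a ∈ A' := ⟨a, ha, rfl⟩
      rcases hP _ hga with hlt | hgt
      · exact absurd h.1 (not_lt.mpr (le_csSup hSfin.bddAbove ⟨hga, hlt⟩))
      · exact absurd h.2 (not_lt.mpr (csInf_le hTfin.bddBelow (mem_insert_of_mem _ ⟨hga, hgt⟩)))
    have hBb : ∀ b ∈ B, g b ∈ Ioo u v := by
      intro b hb
      have hgb : g b ∈ B' := ⟨b, hb, rfl⟩
      exact ⟨lt_of_lt_of_le hubmin (hminle _ hgb), lt_of_le_of_lt (hmaxle _ hgb) hbmaxv⟩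
    exact iff_of_true (unlinked_of_arc ht₀u huv hvle hAa hBb)
      (disjoint_hulls ht₀u huv hvle hAa hBb)
  · -- linked and hulls meet
    push_neg at hP
    obtain ⟨a', ha'A', ha'min, ha'max⟩ := hP
    have h1 : bmin < a' := lt_of_le_of_ne ha'min (fun h => hAB' a' ha'A' (h ▸ hbminB))
    have h2 : a' < bmax := lt_of_le_of_ne ha'max (fun h => hAB' a' ha'A' (h.symm ▸ hbmaxB))
    have ha'A : ((a':ℝ):Circle1) ∈ A := hcoeA _ ha'A'
    have hbmincoe : ((bmin:ℝ):Circle1) ∈ B := hcoeB _ hbminB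
    have hbmaxcoe : ((bmax:ℝ):Circle1) ∈ B := hcoeB _ hbmaxB
    have hbmax1 : bmax < t₀ + 1 := (hB'mem _ hbmaxB).2
    apply iff_of_false
    · refine not_unlinked ht₀A ha'A hbmincoe hbmaxcoe ?_ ?_
      · rw [hgdef] at *
        rw [toIco_coe t₀ (hB'mem _ hbminB)]
        exact h1
      · rw [hgdef] at *
        rw [toIco_coe t₀ (hB'mem _ hbmaxB)]
        exact h2
    · exact hulls_meet ht₀bmin h1 h2 hbmax1 ht₀A ha'A hbmincoe hbmaxcoe
end
end

section
/- Let λ be a d-invariant rational lamination. Every finite λ-unlinked class L is wandering: m_d^n(L) ≠ m_d^m(L) for all n ≠ m. -/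
noncomputable section
open Set Function

lemma md_iterate (d a : ℕ) (x : Circle1) : (md d)^[a] x = (d^a : ℕ) • x := by
  induction a with
  | zero => simp
  | succ n ih =>
    rw [Function.iterate_succ_apply', ih]
    show d • ((d^n:ℕ) • x) = _
    rw [← mul_smul, ← pow_succ']

lemma rat_of_smul_eq (d a b : ℕ) (hd : 2 ≤ d) (hab : a < b) (θ : Circle1)
    (h : (d^a : ℕ) • θ = (d^b : ℕ) • θ) : θ ∈ ratC := by
  obtain ⟨r, rfl⟩ := QuotientAddGroup.mk_surjective θ
  have h2 : ((((d^b : ℕ) * r - (d^a : ℕ) * r : ℝ)) : Circle1) = 0 := by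
    rw [AddCircle.coe_sub]
    rw [show ((d^a:ℕ):ℝ) * r = (d^a:ℕ) • r by simp, show ((d^b:ℕ):ℝ) * r = (d^b:ℕ) • r by simp,
      AddCircle.coe_nsmul, AddCircle.coe_nsmul]
    rw [sub_eq_zero]
    exact h.symm
  rw [AddCircle.coe_eq_zero_iff] at h2
  obtain ⟨k, hk⟩ := h2
  have hne : ((d^b : ℕ) : ℝ) - ((d^a : ℕ) : ℝ) ≠ 0 := by
    have : (d:ℝ)^a < (d:ℝ)^b := by
      apply pow_lt_pow_right₀ (by exact_mod_cast by omega) hab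
    push_cast
    linarith
  have hk' : ((d:ℝ)^b - (d:ℝ)^a) * r = k := by
    simp only [zsmul_eq_mul, smul_eq_mul, mul_one] at hk
    push_cast at hk
    linarith
  have hne' : (d:ℝ)^b - (d:ℝ)^a ≠ 0 := by push_cast at hne; exact hne
  have hr : r = (k : ℝ) / ((d:ℝ)^b - (d:ℝ)^a) := by
    field_simp
    linarith
  refine ⟨(k : ℚ) / (((d^b : ℕ) : ℚ) - ((d^a : ℕ) : ℚ)), ?_⟩
  congr 1
  rw [hr]; push_cast; ring

/-- Every finite `λ`-unlinked class of a `d`-invariant rational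
lamination is wandering: `m_d^n(L) ≠ m_d^m(L)` for all `n ≠ m`. -/
theorem finite_unlinked_class_wandering (d : ℕ) (hd : 2 ≤ d) (lam : InvRatLam d)
    (L : Set Circle1) (hL : IsUnlClass lam.rel L) (hfin : L.Finite) :
    ∀ n m : ℕ, n ≠ m → (md d)^[n] '' L ≠ (md d)^[m] '' L := by
  obtain ⟨θ, hθ, hLdef⟩ := hL
  have hθL : θ ∈ L := by rw [hLdef]; exact ⟨hθ, hθ, Or.inl rfl⟩
  have key : ∀ n m : ℕ, n < m → (md d)^[n] '' L ≠ (md d)^[m] '' L := by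
    intro n m hnm heq
    set k := m - n with hkdef
    have hk0 : 0 < k := by omega
    set S := (md d)^[n] '' L with hS
    have hSfin : S.Finite := hfin.image _
    have himg : (md d)^[k] '' S = S := by
      rw [hS, ← Set.image_comp, ← Function.iterate_add]
      have hkn : k + n = m := by omega
      rw [hkn, ← heq]
    have horb : ∀ i, ((md d)^[k])^[i] ((md d)^[n] θ) ∈ S := by
      intro i; induction i with
      | zero => exact ⟨θ, hθL, rfl⟩
      | succ j ih =>
        rw [Function.iterate_succ_apply', ← himg]
        exact ⟨_, ih, rfl⟩
    obtain ⟨i, -, j, -, hij, hfe⟩ := Set.infinite_univ.exists_ne_map_eq_of_mapsTo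
      (f := fun i => ((md d)^[k])^[i] ((md d)^[n] θ)) (fun i _ => horb i) hSfin
    have main : ∀ i j : ℕ, i < j →
        ((md d)^[k])^[i] ((md d)^[n] θ) = ((md d)^[k])^[j] ((md d)^[n] θ) → False := by
      intro i j hlt he
      rw [← Function.iterate_mul, ← Function.iterate_mul,
        ← Function.iterate_add_apply, ← Function.iterate_add_apply,
        md_iterate, md_iterate] at he
      exact hθ (rat_of_smul_eq d _ _ hd
        (by nlinarith [hk0, hlt]) θ he)
    rcases lt_or_gt_of_ne hij with h | h
    · exact main i j h hfe
    · exact main j i h hfe.symm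
  intro n m hne heq
  rcases lt_or_gt_of_ne hne with h | h
  · exact key n m h heq
  · exact key m n h heq.symm
end
end
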